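/- Let p, q, m be real numbers with q > 0 and p > q. For x > 0 define z(x) = e^{1/(q x^q)} · x^{m-p} · ∫_0^x e^{-1/(q t^q)} · t^{p-q-1} dt (the integrand extended by 0 at t = 0). Then z is differentiable on (0,∞) and satisfies x^{q+1} · z′(x) + (p − m) · x^q · z(x) + z(x) = x^m for all x > 0. -/

import Mathlib

/-!
Write `z = A · F` with `A x = e^{1/(q x^q)} x^{m-p}` and `F x = ∫_0^x e^{-1/(q t^q)} t^{p-q-1} dt`.
The factor `A` solves the homogeneous equation `x^{q+1} A' + (p - m) x^q A + A = 0`, and by the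
fundamental theorem of calculus `F' = e^{-1/(q x^q)} x^{p-q-1}`, so the left-hand side for `z`
collapses to `x^{q+1} A F' = x^m`. The integral converges at `0` because the exponential factor
is at most `1` and `p - q - 1 > -1`.
-/

open MeasureTheory Set Filter

noncomputable section

namespace EulerODE

def kernel (p q t : ℝ) : ℝ := Real.exp (-1 / (q * t ^ q)) * t ^ (p - q - 1)

def factor (p q m x : ℝ) : ℝ := Real.exp (1 / (q * x ^ q)) * x ^ (m - p)

theorem continuousOn_kernel (p q : ℝ) : ContinuousOn (kernel p q) (Ioi 0) := by
  intro t (ht : 0 < t)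
  refine ContinuousAt.continuousWithinAt ?_
  have hpow : ∀ r : ℝ, ContinuousAt (fun s : ℝ => s ^ r) t :=
    fun r => Real.continuousAt_rpow_const t r (Or.inl ht.ne')
  rcases eq_or_ne q 0 with rfl | hq
  · unfold kernel
    simp only [zero_mul, div_zero]
    exact continuousAt_const.mul (hpow _)
  · have hden : q * t ^ q ≠ 0 := mul_ne_zero hq (Real.rpow_pos_of_pos ht q).ne'
    exact ((continuousAt_const.div ((hpow q).const_mul q) hden).rexp).mul (hpow _)

theorem kernel_le_rpow {p q t : ℝ} (hq : 0 ≤ q) (ht : 0 < t) :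
    kernel p q t ≤ t ^ (p - q - 1) := by
  have hexp : Real.exp (-1 / (q * t ^ q)) ≤ 1 := by
    rw [Real.exp_le_one_iff, neg_div]
    exact neg_nonpos.mpr (by positivity)
  exact mul_le_of_le_one_left (by positivity) hexp

theorem intervalIntegrable_kernel {p q : ℝ} (hq : 0 ≤ q) (hpq : q < p) {x : ℝ} (hx : 0 ≤ x) :
    IntervalIntegrable (kernel p q) volume 0 x := by
  have hmeas : AEStronglyMeasurable (kernel p q) (volume.restrict (uIoc 0 x)) := by
    rw [uIoc_of_le hx]
    exact ((continuousOn_kernel p q).mono Ioc_subset_Ioi_self).aestronglyMeasurable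
      measurableSet_Ioc
  refine (intervalIntegral.intervalIntegrable_rpow' (r := p - q - 1) (by linarith)).mono_fun
    hmeas ?_
  filter_upwards [ae_restrict_mem measurableSet_uIoc] with t ht
  rw [uIoc_of_le hx] at ht
  have ht0 : 0 < t := ht.1
  rw [Real.norm_of_nonneg (by unfold kernel; positivity), Real.norm_of_nonneg (by positivity)]
  exact kernel_le_rpow hq ht0

theorem hasDerivAt_setIntegral_Ioo {g : ℝ → ℝ} {a x : ℝ} (hax : a < x)
    (hg : ContinuousOn g (Ioi a)) (hint : IntervalIntegrable g volume a x) :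
    HasDerivAt (fun y => ∫ t in Ioo a y, g t) (g x) x := by
  have hFTC : HasDerivAt (fun y => ∫ t in a..y, g t) (g x) x :=
    intervalIntegral.integral_hasDerivAt_right hint
      (hg.stronglyMeasurableAtFilter isOpen_Ioi x hax) (hg.continuousAt (Ioi_mem_nhds hax))
  refine hFTC.congr_of_eventuallyEq ?_
  filter_upwards [Ioi_mem_nhds hax] with y hy
  rw [intervalIntegral.integral_of_le hy.le, integral_Ioc_eq_integral_Ioo]

theorem hasDerivAt_one_div_mul_rpow {q x : ℝ} (hq : q ≠ 0) (hx : 0 < x) :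
    HasDerivAt (fun y => 1 / (q * y ^ q)) (-x ^ (-q - 1)) x := by
  have h := (Real.hasDerivAt_rpow_const (p := -q) (Or.inl hx.ne')).div_const q
  refine (h.congr_deriv (by field_simp)).congr_of_eventuallyEq ?_
  filter_upwards [Ioi_mem_nhds hx] with y hy
  rw [Real.rpow_neg hy.le]
  field_simp

theorem factor_solves_homogeneous (p m : ℝ) {q x : ℝ} (hq : q ≠ 0) (hx : 0 < x) :
    ∃ d, HasDerivAt (factor p q m) d x ∧
      x ^ (q + 1) * d + (p - m) * x ^ q * factor p q m x + factor p q m x = 0 := by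
  refine ⟨_, (hasDerivAt_one_div_mul_rpow hq hx).exp.mul
    (Real.hasDerivAt_rpow_const (p := m - p) (Or.inl hx.ne')), ?_⟩
  have h1 : x ^ (q + 1) * x ^ (-q - 1) = 1 := by
    rw [← Real.rpow_add hx]; norm_num
  have h2 : x ^ (q + 1) * x ^ (m - p - 1) = x ^ q * x ^ (m - p) := by
    rw [← Real.rpow_add hx, ← Real.rpow_add hx]; ring_nf
  unfold factor
  linear_combination (-(Real.exp (1 / (q * x ^ q)) * x ^ (m - p))) * h1 +
    (m - p) * Real.exp (1 / (q * x ^ q)) * h2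

theorem rpow_mul_factor_mul_kernel (p q m : ℝ) {x : ℝ} (hx : 0 < x) :
    x ^ (q + 1) * factor p q m x * kernel p q x = x ^ m := by
  have hexp : Real.exp (1 / (q * x ^ q)) * Real.exp (-1 / (q * x ^ q)) = 1 := by
    rw [← Real.exp_add, neg_div, add_neg_cancel, Real.exp_zero]
  have hpow : x ^ (q + 1) * x ^ (m - p) * x ^ (p - q - 1) = x ^ m := by
    rw [← Real.rpow_add hx, ← Real.rpow_add hx]; ring_nf
  unfold factor kernel
  linear_combination x ^ (q + 1) * x ^ (m - p) * x ^ (p - q - 1) * hexp + hpow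

end EulerODE

open EulerODE in
theorem euler_ODE_section28 (p q m : ℝ) (hq : 0 < q) (hpq : q < p) :
    ∀ x : ℝ, 0 < x → ∃ d : ℝ,
      HasDerivAt
        (fun y : ℝ => Real.exp (1 / (q * y ^ q)) * y ^ (m - p) *
          ∫ t in Set.Ioo (0 : ℝ) y, Real.exp (-1 / (q * t ^ q)) * t ^ (p - q - 1)) d x ∧
      x ^ (q + 1) * d +
        (p - m) * x ^ q *
          (Real.exp (1 / (q * x ^ q)) * x ^ (m - p) *
            ∫ t in Set.Ioo (0 : ℝ) x, Real.exp (-1 / (q * t ^ q)) * t ^ (p - q - 1)) +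
        (Real.exp (1 / (q * x ^ q)) * x ^ (m - p) *
          ∫ t in Set.Ioo (0 : ℝ) x, Real.exp (-1 / (q * t ^ q)) * t ^ (p - q - 1)) =
      x ^ m := by
  intro x hx
  obtain ⟨d, hA, hhom⟩ := factor_solves_homogeneous p m hq.ne' hx
  have hF : HasDerivAt (fun y => ∫ t in Ioo 0 y, kernel p q t) (kernel p q x) x :=
    hasDerivAt_setIntegral_Ioo hx (continuousOn_kernel p q)
      (intervalIntegrable_kernel hq.le hpq hx.le)
  have hsource := rpow_mul_factor_mul_kernel p q m hx
  refine ⟨_, hA.mul hF, ?_⟩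
  simp only [factor, kernel] at hhom hsource ⊢
  linear_combination
    (∫ t in Ioo 0 x, Real.exp (-1 / (q * t ^ q)) * t ^ (p - q - 1)) * hhom + hsource
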